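/- arXiv:2504.16577 — 2 statements merged into one kernel-verified Lean document; each statement's English description precedes it below -/
import Mathlib

section
/- Let r > 0 be a real number. The function f(α) = log(1+α) − α + (1+α)·r/(1+r), defined for α > 0, attains its maximum uniquely at α = r, and the maximum value is f(r) = log(1+r). -/
/-- Scalar fractional-programming (Lagrangian-dual) transform underlying Lemma 1:
for `r > 0`, the function `f(α) = log(1+α) − α + (1+α)·r/(1+r)` on `α > 0`
attains its maximum uniquely at `α = r`, with maximum value `log(1+r)`. -/
theorem stmt0 (r : ℝ) (hr : 0 < r) :
    (∀ α : ℝ, 0 < α →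
      Real.log (1 + α) - α + (1 + α) * r / (1 + r) ≤ Real.log (1 + r)) ∧
    (Real.log (1 + r) - r + (1 + r) * r / (1 + r) = Real.log (1 + r)) ∧
    (∀ α : ℝ, 0 < α →
      Real.log (1 + α) - α + (1 + α) * r / (1 + r) = Real.log (1 + r) → α = r) := by
  have h1r : (0:ℝ) < 1 + r := by linarith
  refine ⟨?_, ?_, ?_⟩
  · intro α hα
    have hx : (0:ℝ) < (1 + α) / (1 + r) := by positivity
    have hle := Real.log_le_sub_one_of_pos hx
    rw [Real.log_div (by linarith) (by linarith)] at hle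
    have : (1 + α) * r / (1 + r) = (1 + α) - (1 + α)/(1 + r) := by
      field_simp; ring
    rw [this]
    have h2 : (1 + α)/(1 + r) ≥ 1 + Real.log (1+α) - Real.log (1+r) := by linarith
    nlinarith [h2]
  · field_simp; ring
  · intro α hα heq
    by_contra hne
    have hx : (0:ℝ) < (1 + α) / (1 + r) := by positivity
    have hxne : (1 + α) / (1 + r) ≠ 1 := by
      intro h
      apply hne
      field_simp at h
      linarith
    have hlt := Real.log_lt_sub_one_of_pos hx hxne
    rw [Real.log_div (by linarith) (by linarith)] at hlt
    have : (1 + α) * r / (1 + r) = (1 + α) - (1 + α)/(1 + r) := by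
      field_simp; ring
    rw [this] at heq
    linarith
end

section
/- (Lemma 1) Fix channel vectors g_1,…,g_M ∈ ℂ^N, noise power σ² > 0, and powers p_1,…,p_M > 0. For α = (α_1,…,α_M) with α_m > 0, define 𝓕₁(α) = Σ_{m=1}^M log(1+α_m) − Σ_{m=1}^M α_m + Σ_{m=1}^M (1+α_m)·𝒜_m, where 𝒜_m = p_m g_m^H (Σ_{i=m}^M p_i g_i g_i^H + σ² I_N)^{-1} g_m. Then the supremum of 𝓕₁ over all α with positive entries equals the MMSE-SIC sum-rate R_sic = Σ_{m=1}^M log(1 + p_m g_m^H (Σ_{i=m+1}^M p_i g_i g_i^H + σ² I_N)^{-1} g_m), and it is attained at α_m^† = p_m g_m^H (Σ_{i=m+1}^M p_i g_i g_i^H + σ² I_N)^{-1} g_m. -/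
open Matrix ComplexOrder

/-- Interference-plus-noise covariance `Σ_{i=m}^M p_i g_i g_i^H + σ² I_N`
(interference including user `m` itself). -/
noncomputable def covIci {N M : ℕ} (g : Fin M → Fin N → ℂ) (p : Fin M → ℝ) (σ2 : ℝ)
    (m : Fin M) : Matrix (Fin N) (Fin N) ℂ :=
  (∑ i ∈ Finset.Ici m, (p i : ℂ) • Matrix.vecMulVec (g i) (star (g i))) + (σ2 : ℂ) • 1

/-- Interference-plus-noise covariance `Σ_{i=m+1}^M p_i g_i g_i^H + σ² I_N`. -/
noncomputable def covIoi {N M : ℕ} (g : Fin M → Fin N → ℂ) (p : Fin M → ℝ) (σ2 : ℝ)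
    (m : Fin M) : Matrix (Fin N) (Fin N) ℂ :=
  (∑ i ∈ Finset.Ioi m, (p i : ℂ) • Matrix.vecMulVec (g i) (star (g i))) + (σ2 : ℂ) • 1

/-- `𝒜_m = p_m g_m^H (Σ_{i=m}^M p_i g_i g_i^H + σ² I_N)⁻¹ g_m` (a real quantity). -/
noncomputable def Asic {N M : ℕ} (g : Fin M → Fin N → ℂ) (p : Fin M → ℝ) (σ2 : ℝ)
    (m : Fin M) : ℝ :=
  ((p m : ℂ) * (star (g m) ⬝ᵥ (covIci g p σ2 m)⁻¹.mulVec (g m))).re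

/-- `α_m^† = p_m g_m^H (Σ_{i=m+1}^M p_i g_i g_i^H + σ² I_N)⁻¹ g_m`,
the SINR of user `m` under MMSE-SIC (a real quantity). -/
noncomputable def alphaDag {N M : ℕ} (g : Fin M → Fin N → ℂ) (p : Fin M → ℝ) (σ2 : ℝ)
    (m : Fin M) : ℝ :=
  ((p m : ℂ) * (star (g m) ⬝ᵥ (covIoi g p σ2 m)⁻¹.mulVec (g m))).re

lemma vecMulVec_mulVec' {N : ℕ} (v w x : Fin N → ℂ) :
    (Matrix.vecMulVec v w) *ᵥ x = (w ⬝ᵥ x) • v := by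
  ext i
  simp only [Matrix.mulVec, Matrix.vecMulVec_apply, dotProduct,
    Pi.smul_apply, smul_eq_mul, Finset.sum_mul]
  exact Finset.sum_congr rfl fun j _ => by ring

lemma psd_term {N : ℕ} (c : ℝ) (hc : 0 ≤ c) (v : Fin N → ℂ) :
    ((c : ℂ) • Matrix.vecMulVec v (star v)).PosSemidef := by
  refine Matrix.PosSemidef.of_dotProduct_mulVec_nonneg ?_ ?_
  · unfold Matrix.IsHermitian
    ext i j
    simp [Matrix.conjTranspose_apply, Matrix.vecMulVec_apply, mul_comm]
  · intro x
    rw [smul_mulVec, vecMulVec_mulVec', dotProduct_smul, dotProduct_smul,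
      smul_eq_mul, smul_eq_mul]
    have h1 : star x ⬝ᵥ v = star (star v ⬝ᵥ x) := by
      simp [dotProduct, mul_comm]
    rw [h1]
    exact mul_nonneg (Complex.zero_le_real.2 hc) (mul_star_self_nonneg _)

lemma smul_one_posDef {N : ℕ} {σ2 : ℝ} (hσ : 0 < σ2) :
    ((σ2 : ℂ) • (1 : Matrix (Fin N) (Fin N) ℂ)).PosDef := by
  rw [Matrix.smul_one_eq_diagonal]
  exact Matrix.PosDef.diagonal fun _ => Complex.zero_lt_real.2 hσ

lemma sum_psd {N M : ℕ} (g : Fin M → Fin N → ℂ) (p : Fin M → ℝ) (hp : ∀ m, 0 < p m)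
    (s : Finset (Fin M)) :
    (∑ i ∈ s, (p i : ℂ) • Matrix.vecMulVec (g i) (star (g i))).PosSemidef :=
  Finset.sum_induction _ _ (fun _ _ ha hb => ha.add hb) Matrix.PosSemidef.zero
    (fun i _ => psd_term (p i) (hp i).le (g i))

lemma covIoi_posDef {N M : ℕ} (g : Fin M → Fin N → ℂ) (σ2 : ℝ) (hσ : 0 < σ2)
    (p : Fin M → ℝ) (hp : ∀ m, 0 < p m) (m : Fin M) : (covIoi g p σ2 m).PosDef :=
  Matrix.PosDef.posSemidef_add (sum_psd g p hp _) (smul_one_posDef hσ)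

lemma covIci_posDef {N M : ℕ} (g : Fin M → Fin N → ℂ) (σ2 : ℝ) (hσ : 0 < σ2)
    (p : Fin M → ℝ) (hp : ∀ m, 0 < p m) (m : Fin M) : (covIci g p σ2 m).PosDef :=
  Matrix.PosDef.posSemidef_add (sum_psd g p hp _) (smul_one_posDef hσ)

lemma quad_real {N : ℕ} {B : Matrix (Fin N) (Fin N) ℂ} (hB : B.PosDef) (v : Fin N → ℂ) :
    ∃ γ : ℝ, 0 ≤ γ ∧ star v ⬝ᵥ B⁻¹ *ᵥ v = (γ : ℂ) := by
  have h := (hB.inv.posSemidef).dotProduct_mulVec_nonneg v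
  refine ⟨(star v ⬝ᵥ B⁻¹ *ᵥ v).re, (Complex.le_def.1 h).1, ?_⟩
  rw [Complex.ext_iff]
  exact ⟨by simp, by simpa using ((Complex.le_def.1 h).2).symm⟩

/-- The key Sherman–Morrison consequence: `α_m^† ≥ 0` and `𝒜_m = α_m^†/(1+α_m^†)`. -/
lemma sherman {N M : ℕ} (g : Fin M → Fin N → ℂ) (σ2 : ℝ) (hσ : 0 < σ2)
    (p : Fin M → ℝ) (hp : ∀ m, 0 < p m) (m : Fin M) :
    0 ≤ alphaDag g p σ2 m ∧
      Asic g p σ2 m = alphaDag g p σ2 m / (1 + alphaDag g p σ2 m) := by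
  set v := g m with hv
  have hA : (covIoi g p σ2 m).PosDef := covIoi_posDef g σ2 hσ p hp m
  have hB : (covIci g p σ2 m).PosDef := covIci_posDef g σ2 hσ p hp m
  obtain ⟨γ, hγ0, hγ⟩ := quad_real hA v
  have halpha : alphaDag g p σ2 m = p m * γ := by
    unfold alphaDag
    rw [← hv, hγ, ← Complex.ofReal_mul, Complex.ofReal_re]
  have hα0 : 0 ≤ p m * γ := mul_nonneg (hp m).le hγ0
  have ht0 : (1 + p m * γ : ℝ) ≠ 0 := by linarith
  have ht0' : ((1 + p m * γ : ℝ) : ℂ) ≠ 0 := Complex.ofReal_ne_zero.2 ht0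
  have hdetA : IsUnit (covIoi g p σ2 m).det := isUnit_iff_ne_zero.2 hA.det_pos.ne'
  have hdetB : IsUnit (covIci g p σ2 m).det := isUnit_iff_ne_zero.2 hB.det_pos.ne'
  have hsplit : covIci g p σ2 m
      = (p m : ℂ) • Matrix.vecMulVec v (star v) + covIoi g p σ2 m := by
    unfold covIci covIoi
    rw [← Finset.Ioi_insert m, Finset.sum_insert Finset.notMem_Ioi_self, add_assoc]
  have hBv : covIci g p σ2 m *ᵥ
      (((1 + p m * γ : ℝ) : ℂ)⁻¹ • ((covIoi g p σ2 m)⁻¹ *ᵥ v)) = v := by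
    rw [Matrix.mulVec_smul, hsplit, Matrix.add_mulVec, smul_mulVec, vecMulVec_mulVec',
      Matrix.mulVec_mulVec, Matrix.mul_nonsing_inv _ hdetA, Matrix.one_mulVec, hγ]
    ext i
    simp only [Pi.smul_apply, Pi.add_apply, smul_eq_mul]
    have h2 : (1 : ℂ) + (p m : ℂ) * (γ : ℂ) ≠ 0 := by push_cast at ht0'; exact ht0'
    field_simp
    push_cast
    ring
  have hBinvv : (covIci g p σ2 m)⁻¹ *ᵥ v
      = ((1 + p m * γ : ℝ) : ℂ)⁻¹ • ((covIoi g p σ2 m)⁻¹ *ᵥ v) := by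
    conv_lhs => rw [← hBv]
    rw [Matrix.mulVec_mulVec, Matrix.nonsing_inv_mul _ hdetB, Matrix.one_mulVec]
  have hAsic : Asic g p σ2 m = (p m * γ) / (1 + p m * γ) := by
    unfold Asic
    rw [← hv, hBinvv, dotProduct_smul, hγ, smul_eq_mul]
    have : (p m : ℂ) * (((1 + p m * γ : ℝ) : ℂ)⁻¹ * (γ : ℂ))
        = (((p m * γ) / (1 + p m * γ) : ℝ) : ℂ) := by
      push_cast
      field_simp
    rw [this, Complex.ofReal_re]
  rw [halpha, hAsic]
  exact ⟨hα0, rfl⟩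

lemma term_ineq (β α : ℝ) (hα : 0 ≤ α) (hβ : 0 < β) :
    Real.log (1 + β) - β + (1 + β) * (α / (1 + α)) ≤ Real.log (1 + α) := by
  have h1 : (0:ℝ) < 1 + α := by linarith
  have h2 : (0:ℝ) < 1 + β := by linarith
  have hlog := Real.log_le_sub_one_of_pos (show (0:ℝ) < (1 + β) / (1 + α) by positivity)
  rw [Real.log_div h2.ne' h1.ne'] at hlog
  have key : (1 + β) / (1 + α) = (1 + β) - (1 + β) * (α / (1 + α)) := by
    field_simp
    ring
  linarith

/-- Lemma 1: the supremum over `α` with positive entries of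
`𝓕₁(α) = Σ log(1+α_m) − Σ α_m + Σ (1+α_m)𝒜_m` equals the MMSE-SIC sum-rate
`R_sic = Σ log(1+α_m^†)`, and it is attained at `α = α^†`. -/
theorem stmt6 (N M : ℕ) (g : Fin M → Fin N → ℂ) (σ2 : ℝ) (hσ : 0 < σ2)
    (p : Fin M → ℝ) (hp : ∀ m, 0 < p m) :
    (∀ α : Fin M → ℝ, (∀ m, 0 < α m) →
      (∑ m, Real.log (1 + α m)) - (∑ m, α m) + ∑ m, (1 + α m) * Asic g p σ2 m
        ≤ ∑ m, Real.log (1 + alphaDag g p σ2 m)) ∧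
    ((∑ m, Real.log (1 + alphaDag g p σ2 m)) - (∑ m, alphaDag g p σ2 m)
        + ∑ m, (1 + alphaDag g p σ2 m) * Asic g p σ2 m
      = ∑ m, Real.log (1 + alphaDag g p σ2 m)) := by
  have H := sherman g σ2 hσ p hp
  have hAd0 : ∀ m, (0:ℝ) < 1 + alphaDag g p σ2 m := fun m => by
    have := (H m).1; linarith
  constructor
  · intro α hαv
    rw [← Finset.sum_sub_distrib, ← Finset.sum_add_distrib]
    refine Finset.sum_le_sum fun m _ => ?_
    rw [(H m).2]
    exact term_ineq (α m) (alphaDag g p σ2 m) (H m).1 (hαv m)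
  · have hsum : ∑ m, (1 + alphaDag g p σ2 m) * Asic g p σ2 m
        = ∑ m, alphaDag g p σ2 m := by
      refine Finset.sum_congr rfl fun m _ => ?_
      rw [(H m).2, mul_comm]
      exact div_mul_cancel₀ _ (hAd0 m).ne'
    rw [hsum]
    ring
end
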